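/- arXiv:1409.4889 — 2 statements merged into one kernel-verified Lean document; each statement's English description precedes it below -/
import Mathlib

section
/- Let β : (0, λ₀) → ℝ be a monotone decreasing function satisfying β(λ) ≤ C log(1/λ) for all λ ∈ (0, λ₀), where C > 0. Set C₀ = C + 1. Then there is no λ̃ ∈ (0, λ₀) such that |β'(λ)| > C₀/λ at every point λ ∈ (0, λ̃) of differentiability of β. Consequently, there exists a sequence λ_n ↓ 0 of differentiability points of β with |β'(λ_n)| ≤ C₀/λ_n. -/
open MeasureTheory Set Filter Function

lemma mono_lintegral_deriv_le {f : ℝ → ℝ} (hf : Monotone f) {a b : ℝ} (hab : a < b) :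
    ∫⁻ x in Set.Ioo a b, ENNReal.ofReal (deriv f x) ≤ ENNReal.ofReal (f b - f a) := by
  set μ := hf.stieltjesFunction.measure with hμ
  have h1 : ∀ᵐ x, ENNReal.ofReal (deriv f x) ≤ μ.rnDeriv volume x := by
    filter_upwards [hf.ae_hasDerivAt] with x hx
    rw [hx.deriv]
    exact ENNReal.ofReal_toReal_le
  calc ∫⁻ x in Set.Ioo a b, ENNReal.ofReal (deriv f x)
      ≤ ∫⁻ x in Set.Ioo a b, μ.rnDeriv volume x :=
        lintegral_mono_ae (ae_restrict_of_ae h1)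
    _ ≤ μ (Set.Ioo a b) := Measure.setLIntegral_rnDeriv_le _
    _ = ENNReal.ofReal (leftLim hf.stieltjesFunction b - hf.stieltjesFunction a) :=
        StieltjesFunction.measure_Ioo _
    _ ≤ ENNReal.ofReal (f b - f a) := by
        apply ENNReal.ofReal_le_ofReal
        have h2 : f a ≤ hf.stieltjesFunction a := by
          rw [hf.stieltjesFunction_eq]; exact hf.le_rightLim le_rfl
        have h3 : leftLim hf.stieltjesFunction b ≤ f b := by
          apply le_of_tendsto (hf.stieltjesFunction.mono.tendsto_leftLim b)
          filter_upwards [Ioo_mem_nhdsLT_of_mem (show b ∈ Set.Ioc a b from ⟨hab, le_rfl⟩)] with y hy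
          rw [hf.stieltjesFunction_eq]
          exact hf.rightLim_le hy.2
        linarith

theorem stmt5 (β : ℝ → ℝ) (lam0 C : ℝ) (hlam0 : 0 < lam0) (hC : 0 < C)
    (hmono : AntitoneOn β (Set.Ioo 0 lam0))
    (hbd : ∀ lam ∈ Set.Ioo 0 lam0, β lam ≤ C * Real.log (1/lam)) :
    (¬ ∃ lt ∈ Set.Ioo 0 lam0, ∀ lam ∈ Set.Ioo 0 lt, DifferentiableAt ℝ β lam →
        (C + 1)/lam < |deriv β lam|) ∧
    ∃ lamseq : ℕ → ℝ, StrictAnti lamseq ∧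
      Filter.Tendsto lamseq Filter.atTop (nhds 0) ∧
      ∀ n, lamseq n ∈ Set.Ioo 0 lam0 ∧ DifferentiableAt ℝ β (lamseq n) ∧
        |deriv β (lamseq n)| ≤ (C + 1)/(lamseq n) := by
  have part1 : ¬ ∃ lt ∈ Set.Ioo 0 lam0, ∀ lam ∈ Set.Ioo 0 lt, DifferentiableAt ℝ β lam →
      (C + 1)/lam < |deriv β lam| := by
    rintro ⟨lt, ⟨hlt0, hltlam0⟩, H⟩
    have key : ∀ a ∈ Set.Ioo (0:ℝ) lt,
        (C + 1) * (Real.log lt - Real.log a) ≤ β a - β lt := by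
      intro a ⟨ha0, halt⟩
      set f : ℝ → ℝ := fun x => -β (max a (min x lt)) with hfdef
      have hsub : Set.Icc a lt ⊆ Set.Ioo 0 lam0 := fun x hx =>
        ⟨lt_of_lt_of_le ha0 hx.1, lt_of_le_of_lt hx.2 hltlam0⟩
      have hclamp : ∀ x, max a (min x lt) ∈ Set.Icc a lt := fun x =>
        ⟨le_max_left _ _, max_le halt.le (min_le_right _ _)⟩
      have hfmono : Monotone f := by
        intro x y hxy
        have := hmono (hsub (hclamp x)) (hsub (hclamp y))
          (max_le_max le_rfl (min_le_min hxy le_rfl))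
        simp only [hfdef]
        linarith
      have hfeq : ∀ x ∈ Set.Ioo a lt, f =ᶠ[nhds x] (fun y => -β y) := by
        intro x hx
        filter_upwards [Ioo_mem_nhds hx.1 hx.2] with y hy
        simp only [hfdef]
        rw [min_eq_left hy.2.le, max_eq_right hy.1.le]
      have hlow : ∀ᵐ x, x ∈ Set.Ioo a lt →
          ENNReal.ofReal ((C + 1)/x) ≤ ENNReal.ofReal (deriv f x) := by
        filter_upwards [hfmono.ae_hasDerivAt] with x hx hxmem
        have heq := hfeq x hxmem
        have hd : deriv f x = -deriv β x := by
          rw [heq.deriv_eq]; exact deriv.neg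
        have hdiffβ : DifferentiableAt ℝ β x := by
          have h1 : DifferentiableAt ℝ (fun y => -β y) x :=
            heq.differentiableAt_iff.mp hx.differentiableAt
          simpa using h1.neg
        have hβbig := H x ⟨lt_trans ha0 hxmem.1, hxmem.2⟩ hdiffβ
        have hfd0 : 0 ≤ deriv f x := by rw [hx.deriv]; exact ENNReal.toReal_nonneg
        apply ENNReal.ofReal_le_ofReal
        rw [hd] at hfd0 ⊢
        calc (C + 1)/x ≤ |deriv β x| := hβbig.le
          _ = -deriv β x := by rw [abs_of_nonpos (by linarith)]
      have hint : IntegrableOn (fun x => (C + 1)/x) (Set.Ioo a lt) := by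
        apply ((continuousOn_const.div continuousOn_id
          (fun x hx => ne_of_gt (lt_of_lt_of_le ha0 hx.1))).integrableOn_Icc).mono_set
          Set.Ioo_subset_Icc_self
      have hcalc : ∫⁻ x in Set.Ioo a lt, ENNReal.ofReal ((C + 1)/x)
          = ENNReal.ofReal ((C + 1) * (Real.log lt - Real.log a)) := by
        rw [← MeasureTheory.ofReal_integral_eq_lintegral_ofReal hint ?nn]
        case nn =>
          refine Filter.eventually_of_mem (self_mem_ae_restrict measurableSet_Ioo) ?_
          intro x hx
          exact div_nonneg (by linarith) (lt_trans ha0 hx.1).le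
        congr 1
        have h0 : ∫ x in Set.Ioo a lt, (C + 1)/x = ∫ x in a..lt, (C + 1)/x := by
          rw [intervalIntegral.integral_of_le halt.le, MeasureTheory.integral_Ioc_eq_integral_Ioo]
        rw [h0]
        simp_rw [div_eq_mul_inv]
        rw [intervalIntegral.integral_const_mul, integral_inv]
        · rw [Real.log_div (ne_of_gt (lt_trans ha0 halt)) (ne_of_gt ha0)]
        · rw [Set.uIcc_of_le halt.le]
          rintro ⟨h1, -⟩
          exact absurd h1 (not_le.mpr ha0)
      have hcomb : ENNReal.ofReal ((C + 1) * (Real.log lt - Real.log a))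
          ≤ ENNReal.ofReal (f lt - f a) := by
        calc ENNReal.ofReal ((C + 1) * (Real.log lt - Real.log a))
            = ∫⁻ x in Set.Ioo a lt, ENNReal.ofReal ((C + 1)/x) := hcalc.symm
          _ ≤ ∫⁻ x in Set.Ioo a lt, ENNReal.ofReal (deriv f x) :=
              lintegral_mono_ae ((ae_restrict_iff' measurableSet_Ioo).2 hlow)
          _ ≤ ENNReal.ofReal (f lt - f a) := mono_lintegral_deriv_le hfmono halt
      have hflt : f lt = -β lt := by
        simp only [hfdef, min_self, max_eq_right halt.le]
      have hfa : f a = -β a := by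
        simp only [hfdef, min_eq_left halt.le, max_self]
      have hβab : β lt ≤ β a := hmono (hsub ⟨le_rfl, halt.le⟩) (hsub ⟨halt.le, le_rfl⟩) halt.le
      have := (ENNReal.ofReal_le_ofReal_iff (by rw [hflt, hfa]; linarith)).mp hcomb
      rw [hflt, hfa] at this
      linarith
    -- derive the contradiction
    set K : ℝ := -β lt - (C + 1) * Real.log lt with hK
    set a : ℝ := min (lt/2) (Real.exp (-(K + 1))) with ha
    have ha0 : 0 < a := lt_min (by linarith) (Real.exp_pos _)
    have halt : a < lt := lt_of_le_of_lt (min_le_left _ _) (by linarith)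
    have h1 := key a ⟨ha0, halt⟩
    have h2 := hbd a ⟨ha0, lt_trans halt hltlam0⟩
    rw [one_div, Real.log_inv] at h2
    have h3 : -Real.log a ≤ K := by nlinarith
    have h4 : Real.log a ≤ -(K + 1) := by
      calc Real.log a ≤ Real.log (Real.exp (-(K + 1))) :=
        Real.log_le_log ha0 (min_le_right _ _)
      _ = -(K + 1) := Real.log_exp _
    linarith
  refine ⟨part1, ?_⟩
  have P : ∀ t, t ∈ Set.Ioo (0:ℝ) lam0 → ∃ y, y ∈ Set.Ioo 0 t ∧
      DifferentiableAt ℝ β y ∧ |deriv β y| ≤ (C + 1)/y := by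
    intro t ht
    by_contra hcon
    push_neg at hcon
    exact part1 ⟨t, ht, fun lam hlam hdiff => hcon lam hlam hdiff⟩
  choose! g hg using P
  set s : ℕ → ℝ := fun n => Nat.rec (g (lam0/2)) (fun m x => g (min x (1/((m:ℝ)+1)))) n with hs
  have h2 : lam0/2 ∈ Set.Ioo (0:ℝ) lam0 := ⟨by linarith, by linarith⟩
  have hs0 : s 0 = g (lam0/2) := rfl
  have hssucc : ∀ n, s (n+1) = g (min (s n) (1/((n:ℝ)+1))) := fun n => rfl
  have hIoo : ∀ n, s n ∈ Set.Ioo (0:ℝ) lam0 := by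
    intro n
    induction n with
    | zero =>
        have := (hg _ h2).1
        exact ⟨this.1, this.2.trans (by linarith)⟩
    | succ m ih =>
        have hmin : min (s m) (1/((m:ℝ)+1)) ∈ Set.Ioo (0:ℝ) lam0 :=
          ⟨lt_min ih.1 (by positivity), lt_of_le_of_lt (min_le_left _ _) ih.2⟩
        have := (hg _ hmin).1
        rw [hssucc]
        exact ⟨this.1, lt_trans this.2 hmin.2⟩
  have hminmem : ∀ n, min (s n) (1/((n:ℝ)+1)) ∈ Set.Ioo (0:ℝ) lam0 := fun n =>
    ⟨lt_min (hIoo n).1 (by positivity), lt_of_le_of_lt (min_le_left _ _) (hIoo n).2⟩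
  refine ⟨s, ?_, ?_, ?_⟩
  · apply strictAnti_nat_of_succ_lt
    intro n
    have := (hg _ (hminmem n)).1
    rw [← hssucc] at this
    exact lt_of_lt_of_le this.2 (min_le_left _ _)
  · apply tendsto_of_tendsto_of_tendsto_of_le_of_le' tendsto_const_nhds
      tendsto_one_div_atTop_nhds_zero_nat
    · exact Filter.Eventually.of_forall fun n => (hIoo n).1.le
    · rw [Filter.eventually_atTop]
      refine ⟨1, fun n hn => ?_⟩
      obtain ⟨m, rfl⟩ := Nat.exists_eq_add_of_le hn
      have := (hg _ (hminmem m)).1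
      rw [← hssucc] at this
      have h5 := lt_of_lt_of_le this.2 (min_le_right _ _)
      calc s (1 + m) = s (m + 1) := by rw [Nat.add_comm]
        _ ≤ 1/((m:ℝ)+1) := h5.le
        _ = 1/((1+m : ℕ):ℝ) := by push_cast; ring_nf
  · intro n
    cases n with
    | zero =>
        have := hg _ h2
        exact ⟨hIoo 0, this.2.1, this.2.2⟩
    | succ m =>
        have := hg _ (hminmem m)
        rw [← hssucc] at this
        exact ⟨hIoo (m+1), this.2.1, this.2.2⟩
end

section
/- Let w_λ ∈ H¹(M) satisfy the weak equation ∫_M (∇w_λ, ∇v) dμ = μ(λ) ∫_M (f₀+λ) v e^{2w_λ} dμ for all v ∈ H¹(M), with Lagrange multipliers μ(λ) > 0, on a closed surface M of unit volume with f₀ smooth and non-constant. Suppose w_λ → 0 in H¹(M) and e^{2w_λ} → 1 in L² as λ ↑ λ_max = -f̄₀. Then μ(λ) → 0 as λ ↑ λ_max. -/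
/-!
Test the weak equation with `v = f₀ - f̄₀`. By Cauchy–Schwarz the left-hand side is at most
`‖W λ‖ ‖T v‖ → 0`. On the right, `e^{2w_λ} → 1` in `L²` (hence in `L¹`) against the uniformly
bounded weight `(f₀ + λ) v`, so the integral tends to `∫ (f₀ + λ)(f₀ - f̄₀) = Var f₀`, which is
positive because `f₀` is not a.e. constant. Hence `μ(λ) = ⟪W λ, T v⟫ / (Var f₀ + o(1)) → 0`.
-/

open MeasureTheory Filter Topology ProbabilityTheory
open scoped ENNReal

section

variable {α : Type*} [MeasurableSpace α] {μ : Measure α} [IsProbabilityMeasure μ]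

theorem integral_add_const_mul_sub_integral {f : α → ℝ} (hf : MemLp f 2 μ) (c : ℝ) :
    ∫ x, (f x + c) * (f x - μ[f]) ∂μ = Var[f; μ] := by
  have hf1 : Integrable f μ := hf.integrable one_le_two
  have hcentered : ∫ x, (f x - μ[f]) ∂μ = 0 := by
    rw [integral_sub hf1 (integrable_const _), integral_const, probReal_univ, one_smul, sub_self]
  have hsplit : ∀ x, (f x + c) * (f x - μ[f]) = (f x - μ[f]) ^ 2 + (μ[f] + c) * (f x - μ[f]) :=
    fun x => by ring
  have hsq : Integrable (fun x => (f x - μ[f]) ^ 2) μ := (hf.sub (memLp_const μ[f])).integrable_sq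
  have hlin : Integrable (fun x => (μ[f] + c) * (f x - μ[f])) μ :=
    (hf1.sub (integrable_const _)).const_mul _
  simp_rw [hsplit]
  rw [integral_add hsq hlin, integral_const_mul, hcentered, mul_zero, add_zero,
    variance_eq_integral hf.aemeasurable]

theorem abs_integral_mul_le_of_abs_le {g h : α → ℝ} {C : ℝ} {p : ℝ≥0∞} (hp : 1 ≤ p)
    (hg : ∀ᵐ x ∂μ, |g x| ≤ C) (hh : MemLp h p μ) :
    |∫ x, g x * h x ∂μ| ≤ C * (eLpNorm h p μ).toReal := by
  obtain ⟨x₀, hx₀⟩ := hg.exists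
  have hC : 0 ≤ C := (abs_nonneg _).trans hx₀
  have hh1 : Integrable h μ := hh.integrable hp
  calc |∫ x, g x * h x ∂μ|
      ≤ ∫ x, C * |h x| ∂μ := by
        rw [← Real.norm_eq_abs]
        refine norm_integral_le_of_norm_le (hh1.abs.const_mul C) ?_
        filter_upwards [hg] with x hx
        rw [Real.norm_eq_abs, abs_mul]
        exact mul_le_mul_of_nonneg_right hx (abs_nonneg _)
    _ = C * (eLpNorm h 1 μ).toReal := by
        rw [integral_const_mul, eLpNorm_one_eq_lintegral_enorm,
          ← integral_norm_eq_lintegral_enorm hh1.aestronglyMeasurable]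
        rfl
    _ ≤ C * (eLpNorm h p μ).toReal := by
        gcongr
        · exact hh.eLpNorm_ne_top
        · exact eLpNorm_le_eLpNorm_of_exponent_le hp hh.aestronglyMeasurable

theorem tendsto_integral_mul_of_tendsto_eLpNorm_sub_one {ι : Type*} {l : Filter ι}
    {g e : ι → α → ℝ} {C L : ℝ} {p : ℝ≥0∞} (hp : 1 ≤ p)
    (hgm : ∀ i, AEStronglyMeasurable (g i) μ) (hg : ∀ᶠ i in l, ∀ᵐ x ∂μ, |g i x| ≤ C)
    (hem : ∀ i, AEStronglyMeasurable (e i) μ)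
    (he : Tendsto (fun i => eLpNorm (fun x => e i x - 1) p μ) l (𝓝 0))
    (hgL : Tendsto (fun i => ∫ x, g i x ∂μ) l (𝓝 L)) :
    Tendsto (fun i => ∫ x, g i x * e i x ∂μ) l (𝓝 L) := by
  have hmem : ∀ᶠ i in l, MemLp (fun x => e i x - 1) p μ :=
    (he.eventually_lt_const ENNReal.zero_lt_top).mono fun i hi =>
      ⟨(hem i).sub aestronglyMeasurable_const, hi⟩
  have hsmall : Tendsto (fun i => ∫ x, g i x * (e i x - 1) ∂μ) l (𝓝 0) := by
    refine squeeze_zero_norm' ?_ (by simpa using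
      ((ENNReal.tendsto_toReal ENNReal.zero_ne_top).comp he).const_mul C)
    filter_upwards [hg, hmem] with i hgi hmi
    exact abs_integral_mul_le_of_abs_le hp hgi hmi
  have hsplit : ∀ᶠ i in l,
      ∫ x, g i x ∂μ + ∫ x, g i x * (e i x - 1) ∂μ = ∫ x, g i x * e i x ∂μ := by
    filter_upwards [hg, hmem] with i hgi hmi
    rw [← integral_add (.of_bound (hgm i) C hgi) ((hmi.integrable hp).bdd_mul (hgm i) hgi)]
    congr with x
    ring
  simpa using (hgL.add hsmall).congr' hsplit

end

theorem tendsto_zero_of_eventuallyEq_mul {ι : Type*} {l : Filter ι} {a b m : ι → ℝ} {c : ℝ}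
    (ha : Tendsto a l (𝓝 0)) (hb : Tendsto b l (𝓝 c)) (hc : c ≠ 0)
    (hab : ∀ᶠ i in l, a i = m i * b i) : Tendsto m l (𝓝 0) := by
  have hquot := ha.div hb hc
  rw [zero_div] at hquot
  refine hquot.congr' ?_
  filter_upwards [hab, hb.eventually_ne hc] with i hi hne
  rw [Pi.div_apply, hi, mul_div_cancel_right₀ _ hne]

theorem stmt16_general {M : Type*} [MeasurableSpace M]
    (μ : Measure M) [IsProbabilityMeasure μ]
    {H : Type*} [NormedAddCommGroup H] [InnerProductSpace ℝ H]
    (f₀ : M → ℝ) (hf₀m : Measurable f₀) (Cf : ℝ) (hCf : ∀ x, |f₀ x| ≤ Cf)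
    (fbar : ℝ) (hfbar : fbar = ∫ x, f₀ x ∂μ)
    (hnc : ¬ f₀ =ᵐ[μ] fun _ => fbar)
    (hmean : fbar < 0)
    (w : ℝ → M → ℝ) (hwm : ∀ lam, Measurable (w lam))
    (W : ℝ → H) (T : (M → ℝ) → H) (muL : ℝ → ℝ)
    (heq : ∀ lam ∈ Set.Ioo 0 (-fbar), ∀ v : M → ℝ, Measurable v → (∀ x, |v x| ≤ 2 * Cf) →
      (inner ℝ (W lam) (T v) : ℝ)
        = muL lam * ∫ x, (f₀ x + lam) * v x * Real.exp (2 * w lam x) ∂μ)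
    (hW : Tendsto (fun lam => ‖W lam‖) (nhdsWithin (-fbar) (Set.Iio (-fbar))) (nhds 0))
    (hL2 : Tendsto (fun lam => eLpNorm (fun x => Real.exp (2 * w lam x) - 1) 2 μ)
      (nhdsWithin (-fbar) (Set.Iio (-fbar))) (nhds 0)) :
    Tendsto muL (nhdsWithin (-fbar) (Set.Iio (-fbar))) (nhds 0) := by
  have hCf' : ∀ᵐ x ∂μ, ‖f₀ x‖ ≤ Cf := ae_of_all _ hCf
  have hf₀ : MemLp f₀ 2 μ := .of_bound hf₀m.aestronglyMeasurable Cf hCf'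
  have hfbar_le : |fbar| ≤ Cf := by simpa [hfbar] using norm_integral_le_of_norm_le_const hCf'
  set v : M → ℝ := fun x => f₀ x - fbar
  have hv : ∀ x, |v x| ≤ 2 * Cf := fun x => (abs_sub _ _).trans (by linarith [hCf x])
  have hIoo : ∀ᶠ lam in 𝓝[<] (-fbar), lam ∈ Set.Ioo 0 (-fbar) := Ioo_mem_nhdsLT (by linarith)
  have hweight : ∀ lam ∈ Set.Ioo 0 (-fbar), ∀ x, |(f₀ x + lam) * v x| ≤ (Cf - fbar) * (2 * Cf) := by
    intro lam hlam x
    have hsum : |f₀ x + lam| ≤ Cf - fbar :=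
      (abs_add_le _ _).trans (by rw [abs_of_pos hlam.1]; linarith [hCf x, hlam.2])
    rw [abs_mul]
    exact mul_le_mul hsum (hv x) (abs_nonneg _) ((abs_nonneg _).trans hsum)
  have hlhs : Tendsto (fun lam => (inner ℝ (W lam) (T v) : ℝ)) (𝓝[<] (-fbar)) (𝓝 0) :=
    squeeze_zero_norm (fun lam => norm_inner_le_norm _ _) (by simpa using hW.mul_const ‖T v‖)
  have hrhs : Tendsto (fun lam => ∫ x, (f₀ x + lam) * v x * Real.exp (2 * w lam x) ∂μ)
      (𝓝[<] (-fbar)) (𝓝 Var[f₀; μ]) := by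
    refine tendsto_integral_mul_of_tendsto_eLpNorm_sub_one one_le_two
      (fun lam => ((hf₀m.add_const lam).mul (hf₀m.sub_const fbar)).aestronglyMeasurable)
      (hIoo.mono fun lam hlam => ae_of_all _ (hweight lam hlam))
      (fun lam => ((hwm lam).const_mul 2).exp.aestronglyMeasurable) hL2
      (tendsto_const_nhds.congr fun lam => ?_)
    rw [← integral_add_const_mul_sub_integral hf₀ lam]
    simp only [v, hfbar]
  have hvar : 0 < Var[f₀; μ] := (variance_nonneg _ _).lt_of_ne fun h =>
    hnc (hfbar ▸ ae_eq_integral_of_variance_eq_zero hf₀ h.symm)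
  exact tendsto_zero_of_eventuallyEq_mul hlhs hrhs hvar.ne'
    (hIoo.mono fun lam hlam => heq lam hlam v (hf₀m.sub_const fbar) hv)

theorem stmt16 {M : Type*} [MeasurableSpace M] [Nonempty M]
    (μ : Measure M) [IsProbabilityMeasure μ]
    {H : Type*} [NormedAddCommGroup H] [InnerProductSpace ℝ H]
    (f₀ : M → ℝ) (hf₀m : Measurable f₀) (Cf : ℝ) (hCf : ∀ x, |f₀ x| ≤ Cf)
    (fbar : ℝ) (hfbar : fbar = ∫ x, f₀ x ∂μ)
    (hnc : ¬ f₀ =ᵐ[μ] fun _ => fbar)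
    (hmean : fbar < 0)
    (w : ℝ → M → ℝ) (hwm : ∀ lam, Measurable (w lam))
    (W : ℝ → H) (T : (M → ℝ) → H) (muL : ℝ → ℝ)
    (hmuL : ∀ lam ∈ Set.Ioo 0 (-fbar), 0 < muL lam)
    (heq : ∀ lam ∈ Set.Ioo 0 (-fbar), ∀ v : M → ℝ, Measurable v → (∀ x, |v x| ≤ 2 * Cf) →
      (inner ℝ (W lam) (T v) : ℝ)
        = muL lam * ∫ x, (f₀ x + lam) * v x * Real.exp (2 * w lam x) ∂μ)
    (hW : Tendsto (fun lam => ‖W lam‖) (nhdsWithin (-fbar) (Set.Iio (-fbar))) (nhds 0))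
    (hL2 : Tendsto (fun lam => eLpNorm (fun x => Real.exp (2 * w lam x) - 1) 2 μ)
      (nhdsWithin (-fbar) (Set.Iio (-fbar))) (nhds 0)) :
    Tendsto muL (nhdsWithin (-fbar) (Set.Iio (-fbar))) (nhds 0) :=
  stmt16_general μ f₀ hf₀m Cf hCf fbar hfbar hnc hmean w hwm W T muL heq hW hL2
end
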